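/- For all r > 0 and θ, α ∈ ℝ one has the spiral scaling symmetry W(r e^{aα}, θ + α) = e^{(a+i)α} · W(r, θ); equivalently, the velocity profile satisfies w(z·e^{(a+i)α}) = e^{(a+i)α}·w(z) for the planar field w determined by W. -/
import Mathlib


/-- The complex constant `A := −2ai/(a+i)`. -/
noncomputable def Aconst (a : ℝ) : ℂ := -2 * (a : ℂ) * Complex.I / ((a : ℂ) + Complex.I)

/-- The self-similar velocity profile
`W(r,θ) := e^{iθ} Σ_{k} (2a g_k/(r(a−i))) · conj( exp((2a/(a+i)) ln r) · e^{A(θ_k−θ)} ·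
e^{2πJ(r,θ,k)A}/(1−e^{2πA}) )`, where `J` is the winding-number function. -/
noncomputable def Wprof (a : ℝ) (M : ℕ) (g θs : Fin M → ℝ)
    (J : ℝ → ℝ → Fin M → ℤ) (r θ : ℝ) : ℂ :=
  Complex.exp (Complex.I * (θ : ℂ)) * ∑ k : Fin M,
    (2 * (a : ℂ) * (g k : ℂ) / ((r : ℂ) * ((a : ℂ) - Complex.I))) *
      (starRingEnd ℂ)
        (Complex.exp ((2 * (a : ℂ) / ((a : ℂ) + Complex.I)) * (Real.log r : ℂ)) *
          Complex.exp (Aconst a * ((θs k : ℂ) - (θ : ℂ))) *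
          (Complex.exp (2 * (Real.pi : ℂ) * (J r θ k : ℂ) * Aconst a) /
            (1 - Complex.exp (2 * (Real.pi : ℂ) * Aconst a))))

/-- For all `r > 0` and `θ, α ∈ ℝ` the spiral scaling symmetry
`W(r e^{aα}, θ + α) = e^{(a+i)α} · W(r, θ)` holds. -/
theorem Wprof_scaling (a : ℝ) (ha : 0 < a) (M : ℕ) (hM : 1 ≤ M)
    (g θs : Fin M → ℝ) (J : ℝ → ℝ → Fin M → ℤ)
    (hJ : ∀ (r θ : ℝ) (k : Fin M), 0 < r →
      IsLeast {j : ℤ | 0 < a * (2 * Real.pi * (j : ℝ) + θs k - θ) + Real.log r} (J r θ k))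
    (r θ α : ℝ) (hr : 0 < r) :
    Wprof a M g θs J (r * Real.exp (a * α)) (θ + α) =
      Complex.exp (((a : ℂ) + Complex.I) * (α : ℂ)) * Wprof a M g θs J r θ := by
  have hre : (0:ℝ) < r * Real.exp (a * α) := by positivity
  have hJeq : ∀ k : Fin M, J (r * Real.exp (a * α)) (θ + α) k = J r θ k := by
    intro k
    have h1 := hJ (r * Real.exp (a * α)) (θ + α) k hre
    have h2 := hJ r θ k hr
    have hset : {j : ℤ | 0 < a * (2 * Real.pi * (j : ℝ) + θs k - (θ + α)) +
        Real.log (r * Real.exp (a * α))} =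
        {j : ℤ | 0 < a * (2 * Real.pi * (j : ℝ) + θs k - θ) + Real.log r} := by
      ext j
      simp only [Set.mem_setOf_eq, Real.log_mul hr.ne' (Real.exp_pos _).ne', Real.log_exp]
      constructor <;> intro h <;> nlinarith
    rw [hset] at h1
    exact h1.unique h2
  have hlog : Real.log (r * Real.exp (a * α)) = Real.log r + a * α := by
    rw [Real.log_mul hr.ne' (Real.exp_pos _).ne', Real.log_exp]
  have hai : ((a:ℂ) + Complex.I) ≠ 0 := by
    intro h
    have := congrArg Complex.im h
    simp at this
  unfold Wprof
  simp only [Finset.mul_sum]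
  apply Finset.sum_congr rfl
  intro k _
  rw [hJeq k, hlog]
  have hX : Complex.exp ((2 * (a:ℂ) / ((a:ℂ) + Complex.I)) * ((Real.log r + a * α : ℝ) : ℂ)) *
      Complex.exp (Aconst a * ((θs k : ℂ) - ((θ + α : ℝ) : ℂ)))
      = Complex.exp ((2 * a * α : ℝ)) *
        (Complex.exp ((2 * (a:ℂ) / ((a:ℂ) + Complex.I)) * ((Real.log r : ℝ) : ℂ)) *
         Complex.exp (Aconst a * ((θs k : ℂ) - (θ : ℂ)))) := by
    rw [← Complex.exp_add, ← Complex.exp_add, ← Complex.exp_add]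
    congr 1
    unfold Aconst
    push_cast
    field_simp
    ring
  rw [hX]
  have hexpre : ((Real.exp (a * α) : ℝ) : ℂ) = Complex.exp ((a:ℂ) * (α:ℂ)) := by
    rw [Complex.ofReal_exp]; push_cast; ring_nf
  push_cast [hexpre]
  have hconj : (starRingEnd ℂ) (Complex.exp (2 * (a:ℂ) * (α:ℂ))) =
      Complex.exp (2 * (a:ℂ) * (α:ℂ)) := by
    have h2 : (2 * (a:ℂ) * (α:ℂ)) = ((2 * a * α : ℝ) : ℂ) := by push_cast; ring
    rw [h2, ← Complex.ofReal_exp, Complex.conj_ofReal]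
  have hsplit : 2 * (a:ℂ) * (g k : ℂ) /
        ((r:ℂ) * Complex.exp ((a:ℂ) * (α:ℂ)) * ((a:ℂ) - Complex.I)) =
      (Complex.exp ((a:ℂ) * (α:ℂ)))⁻¹ *
        (2 * (a:ℂ) * (g k : ℂ) / ((r:ℂ) * ((a:ℂ) - Complex.I))) := by
    rw [inv_mul_eq_div, div_div]; ring_nf
  rw [hsplit]
  simp only [map_mul, map_div₀, map_sub, map_one, hconj]
  have hfin : Complex.exp (Complex.I * ((θ:ℂ) + α)) * Complex.exp (2 * (a:ℂ) * α) *
      (Complex.exp ((a:ℂ) * α))⁻¹ =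
      Complex.exp (((a:ℂ) + Complex.I) * α) * Complex.exp (Complex.I * θ) := by
    rw [← Complex.exp_neg, ← Complex.exp_add, ← Complex.exp_add, ← Complex.exp_add]
    congr 1; ring
  linear_combination ((2 * (a:ℂ) * (g k : ℂ) / ((r:ℂ) * ((a:ℂ) - Complex.I))) *
      ((starRingEnd ℂ) (Complex.exp (2 * (a:ℂ) / ((a:ℂ) + Complex.I) * (Real.log r : ℂ))) *
        (starRingEnd ℂ) (Complex.exp (Aconst a * ((θs k : ℂ) - (θ:ℂ)))) *
        ((starRingEnd ℂ) (Complex.exp (2 * (Real.pi : ℂ) * (J r θ k : ℂ) * Aconst a)) /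
          (1 - (starRingEnd ℂ) (Complex.exp (2 * (Real.pi : ℂ) * Aconst a)))))) * hfin
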